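/- arXiv:0707.3794 — 2 statements merged into one kernel-verified Lean document; each statement's English description precedes it below -/
import Mathlib

section
/- Let G = (V,E) be a finite bi-directed graph. A binary distribution p on V belongs to the model B(G) (i.e., satisfies the connected set Markov property for G) if and only if its Möbius parameters q_A(p) satisfy: for every disconnected set D ⊆ V, with unique partition D = C_1 ∪̇ ⋯ ∪̇ C_r into inclusion-maximal connected subsets, q_D(p) = q_{C_1}(p)·q_{C_2}(p)⋯q_{C_r}(p). -/
/-! Independence of `X_S` and `X_T` is equivalent to `q_{A ∪ B} = q_A q_B` for all `A ⊆ S`,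
`B ⊆ T`: one direction is marginalization, the other Möbius inversion by induction on the number
of ones in the event. If no edge joins `A` and `B`, the connected components of `A ∪ B` are those
of `A` together with those of `B`. So the Markov property gives the factorization of `q_D` over
the components of `D` by splitting off one component `C` at a time (the rest of `D` lies outside
`spo C`), and conversely the factorization gives `q_{A ∪ B} = q_A q_B` whenever `A ⊆ C` and `B`
avoids `spo C`. -/

open Finset

namespace BMMI

variable {V : Type*} [Fintype V] [DecidableEq V]

/-- `Pr p A a` is the probability of the event `X_A = a|_A` under `p`. -/
def Pr (p : (V → Bool) → ℝ) (A : Finset V) (a : V → Bool) : ℝ :=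
  ∑ i ∈ Finset.univ.filter (fun i : V → Bool => ∀ v ∈ A, i v = a v), p i

/-- `p` is a binary distribution on `V`. -/
def IsDist (p : (V → Bool) → ℝ) : Prop :=
  (∀ i, 0 ≤ p i) ∧ ∑ i : V → Bool, p i = 1

/-- `Pr2 p S T a b` is the probability of the joint event `X_S = a|_S, X_T = b|_T`. -/
def Pr2 (p : (V → Bool) → ℝ) (S T : Finset V) (a b : V → Bool) : ℝ :=
  ∑ i ∈ Finset.univ.filter
      (fun i : V → Bool => (∀ v ∈ S, i v = a v) ∧ (∀ v ∈ T, i v = b v)), p i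

/-- `X_S` and `X_T` are independent under `p`. -/
def Indep (p : (V → Bool) → ℝ) (S T : Finset V) : Prop :=
  ∀ a b : V → Bool, Pr2 p S T a b = Pr p S a * Pr p T b

/-- `spo G A` consists of `A` together with all vertices adjacent to a vertex of `A`. -/
def spo (G : SimpleGraph V) [DecidableRel G.Adj] (A : Finset V) : Finset V :=
  Finset.univ.filter (fun w => w ∈ A ∨ ∃ v ∈ A, G.Adj v w)

/-- `C` is connected in `G`: every pair of vertices of `C` is joined by a walk
all of whose vertices lie in `C`. -/
def Conn (G : SimpleGraph V) (C : Finset V) : Prop :=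
  ∀ v ∈ C, ∀ w ∈ C, ∃ W : G.Walk v w, ∀ x ∈ W.support, x ∈ C

/-- The connected set Markov property for the bi-directed graph `G`. -/
def CSMP (G : SimpleGraph V) [DecidableRel G.Adj] (p : (V → Bool) → ℝ) : Prop :=
  ∀ C : Finset V, C.Nonempty → Conn G C → Indep p C (Finset.univ \ spo G C)

/-- `C` is an inclusion-maximal connected subset of `D` (a connected component of the
induced subgraph on `D`). -/
def IsMaxConnComp (G : SimpleGraph V) (D C : Finset V) : Prop :=
  C ⊆ D ∧ C.Nonempty ∧ Conn G C ∧
    ∀ C' : Finset V, C ⊆ C' → C' ⊆ D → Conn G C' → C' = C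

/-- The Möbius parameter `q_A(p) = P(X_A = 0)`. -/
def qM (p : (V → Bool) → ℝ) (A : Finset V) : ℝ := Pr p A (fun _ => false)

end BMMI

namespace BMMI

variable {V : Type*}

lemma forall_mem_eq_update_iff {α β : Type*} [DecidableEq α] {A : Finset α} {v : α}
    (hv : v ∈ A) (a : α → β) (c : β) (i : α → β) :
    (∀ w ∈ A, i w = Function.update a v c w) ↔
      (∀ w ∈ A.erase v, i w = a w) ∧ i v = c := by
  constructor
  · intro h
    refine ⟨fun w hw => ?_, by simpa using h v hv⟩
    simpa [Function.update_of_ne (Finset.ne_of_mem_erase hw)] using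
      h w (Finset.mem_of_mem_erase hw)
  · rintro ⟨h, hv⟩ w hw
    rcases eq_or_ne w v with rfl | hwv
    · simpa using hv
    · simpa [Function.update_of_ne hwv] using h w (Finset.mem_erase.2 ⟨hwv, hw⟩)

lemma sum_filter_eq_sum_filter_true_add_false {ι M : Type*} [Fintype ι] [AddCommMonoid M]
    (f : ι → M) (P : ι → Prop) [DecidablePred P] (g : ι → Bool) :
    ∑ i ∈ univ.filter P, f i =
      ∑ i ∈ univ.filter (fun i => P i ∧ g i = true), f i +
        ∑ i ∈ univ.filter (fun i => P i ∧ g i = false), f i := by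
  rw [← Finset.sum_filter_add_sum_filter_not (univ.filter P) (fun i => g i = true),
    Finset.filter_filter, Finset.filter_filter]
  simp

lemma card_filter_erase_lt {α : Type*} [DecidableEq α] {T : Finset α} {b : α → Bool} {v : α}
    (hv : v ∈ T) (hb : b v = true) :
    #((T.erase v).filter (b · = true)) < #(T.filter (b · = true)) := by
  rw [Finset.filter_erase]
  exact Finset.card_erase_lt_of_mem (Finset.mem_filter.2 ⟨hv, hb⟩)

lemma card_filter_update_lt {α : Type*} [DecidableEq α] {T : Finset α} {b : α → Bool} {v : α}
    (hv : v ∈ T) (hb : b v = true) :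
    #(T.filter (Function.update b v false · = true)) < #(T.filter (b · = true)) := by
  refine Finset.card_lt_card ⟨fun w => ?_, fun h => ?_⟩
  · rcases eq_or_ne w v with rfl | hwv <;> simp_all [Function.update_of_ne]
  · simpa using h (Finset.mem_filter.2 ⟨hv, hb⟩)

section Probability

variable [Fintype V] [DecidableEq V] {p : (V → Bool) → ℝ}

lemma Pr2_comm (S T : Finset V) (a b : V → Bool) :
    Pr2 p S T a b = Pr2 p T S b a := by
  simp only [Pr2, and_comm]

lemma Indep.symm {S T : Finset V} (h : Indep p S T) : Indep p T S := fun a b => by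
  rw [Pr2_comm, h, mul_comm]

lemma Pr_erase {A : Finset V} {v : V} (hv : v ∈ A) (a : V → Bool) :
    Pr p (A.erase v) a =
      Pr p A (Function.update a v true) + Pr p A (Function.update a v false) := by
  simp only [Pr, forall_mem_eq_update_iff hv]
  exact sum_filter_eq_sum_filter_true_add_false p _ (· v)

lemma Pr2_erase_right (S : Finset V) {T : Finset V} {v : V}
    (hv : v ∈ T) (a b : V → Bool) :
    Pr2 p S (T.erase v) a b =
      Pr2 p S T a (Function.update b v true) + Pr2 p S T a (Function.update b v false) := by
  simp only [Pr2, forall_mem_eq_update_iff hv, ← and_assoc]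
  exact sum_filter_eq_sum_filter_true_add_false p
    (fun i => (∀ w ∈ S, i w = a w) ∧ ∀ w ∈ T.erase v, i w = b w) (· v)

lemma Pr2_eq_qM_union {S T : Finset V} {a b : V → Bool}
    (ha : ∀ v ∈ S, a v = false) (hb : ∀ v ∈ T, b v = false) :
    Pr2 p S T a b = qM p (S ∪ T) := by
  unfold Pr2 qM Pr
  refine Finset.sum_congr (Finset.filter_congr fun i _ => ?_) fun _ _ => rfl
  simp +contextual only [Finset.mem_union, or_imp, forall_and, ha, hb]

lemma Pr_eq_qM {A : Finset V} {a : V → Bool}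
    (ha : ∀ v ∈ A, a v = false) : Pr p A a = qM p A := by
  unfold qM Pr
  refine Finset.sum_congr (Finset.filter_congr fun i _ => ?_) fun _ _ => rfl
  simp +contextual only [ha]

lemma qM_empty (hp : IsDist p) : qM p (∅ : Finset V) = 1 := by
  simpa [qM, Pr] using hp.2

lemma Indep.erase_right {S T : Finset V} (h : Indep p S T) (v : V) : Indep p S (T.erase v) := by
  by_cases hv : v ∈ T
  · intro a b
    rw [Pr2_erase_right S hv, h, h, Pr_erase hv, mul_add]
  · rwa [Finset.erase_eq_of_notMem hv]

lemma Indep.mono_right {S T T' : Finset V} (h : Indep p S T) (hT : T' ⊆ T) : Indep p S T' := by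
  have hsdiff : ∀ R : Finset V, Indep p S (T \ R) := by
    intro R
    induction R using Finset.induction_on with
    | empty => simpa using h
    | insert v R _ ih => simpa only [Finset.sdiff_insert] using ih.erase_right v
  simpa only [Finset.sdiff_sdiff_eq_self hT] using hsdiff (T \ T')

lemma Indep.mono {S T S' T' : Finset V} (h : Indep p S T) (hS : S' ⊆ S) (hT : T' ⊆ T) :
    Indep p S' T' :=
  ((h.mono_right hT).symm.mono_right hS).symm

lemma Indep.qM_union {S T : Finset V} (h : Indep p S T) : qM p (S ∪ T) = qM p S * qM p T := by
  have := h (fun _ => false) (fun _ => false)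
  rwa [Pr2_eq_qM_union (fun _ _ => rfl) (fun _ _ => rfl)] at this

/-- One step of Möbius inversion: a `true` at `v ∈ T` is traded for `v` leaving `T` and for a
`false` at `v`. -/
lemma Pr2_eq_mul_of_erase {S T : Finset V} {a b : V → Bool} {v : V} (hv : v ∈ T)
    (hb : b v = true)
    (herase : Pr2 p S (T.erase v) a b = Pr p S a * Pr p (T.erase v) b)
    (hfalse : Pr2 p S T a (Function.update b v false) =
      Pr p S a * Pr p T (Function.update b v false)) :
    Pr2 p S T a b = Pr p S a * Pr p T b := by
  have hupd : Function.update b v true = b := hb ▸ Function.update_eq_self v b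
  rw [Pr2_erase_right S hv, Pr_erase hv, hupd] at herase
  linear_combination herase - hfalse

lemma indep_of_qM_union {S T : Finset V}
    (H : ∀ A ⊆ S, ∀ B ⊆ T, qM p (A ∪ B) = qM p A * qM p B) : Indep p S T := by
  intro a b
  induction hn : #(S.filter (a · = true)) + #(T.filter (b · = true))
    using Nat.strong_induction_on generalizing S T a b with
  | _ n ih =>
  by_cases hT : ∃ v ∈ T, b v = true
  · obtain ⟨v, hv, hb⟩ := hT
    refine Pr2_eq_mul_of_erase hv hb ?_ ?_
    · exact ih _ (hn ▸ by have := card_filter_erase_lt hv hb; omega)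
        (fun A hA B hB => H A hA B (hB.trans (Finset.erase_subset v T))) a b rfl
    · exact ih _ (hn ▸ by have := card_filter_update_lt hv hb; omega) H a _ rfl
  by_cases hS : ∃ v ∈ S, a v = true
  · obtain ⟨v, hv, ha⟩ := hS
    rw [Pr2_comm, mul_comm]
    refine Pr2_eq_mul_of_erase hv ha ?_ ?_
    · rw [Pr2_comm, mul_comm]
      exact ih _ (hn ▸ by have := card_filter_erase_lt hv ha; omega)
        (fun A hA B hB => H A (hA.trans (Finset.erase_subset v S)) B hB) a b rfl
    · rw [Pr2_comm, mul_comm]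
      exact ih _ (hn ▸ by have := card_filter_update_lt hv ha; omega) H _ b rfl
  simp only [not_exists, not_and, Bool.not_eq_true] at hS hT
  rw [Pr2_eq_qM_union hS hT, Pr_eq_qM hS, Pr_eq_qM hT, H S subset_rfl T subset_rfl]

lemma indep_iff_qM_union {S T : Finset V} :
    Indep p S T ↔ ∀ A ⊆ S, ∀ B ⊆ T, qM p (A ∪ B) = qM p A * qM p B :=
  ⟨fun h _ hA _ hB => (h.mono hA hB).qM_union, indep_of_qM_union⟩

end Probability

def ReachableIn (G : SimpleGraph V) (D : Finset V) (v w : V) : Prop :=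
  ∃ W : G.Walk v w, ∀ x ∈ W.support, x ∈ D

section Components

variable {G : SimpleGraph V} {D : Finset V} {u v w : V}

namespace ReachableIn

lemma left_mem (h : ReachableIn G D v w) : v ∈ D :=
  h.choose_spec v h.choose.start_mem_support

lemma right_mem (h : ReachableIn G D v w) : w ∈ D :=
  h.choose_spec w h.choose.end_mem_support

lemma refl (hv : v ∈ D) : ReachableIn G D v v :=
  ⟨.nil, by simpa using hv⟩

lemma symm (h : ReachableIn G D v w) : ReachableIn G D w v := by
  obtain ⟨W, hW⟩ := h
  exact ⟨W.reverse, fun x hx => hW x (by simpa using hx)⟩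

lemma trans (h₁ : ReachableIn G D u v) (h₂ : ReachableIn G D v w) : ReachableIn G D u w := by
  obtain ⟨W₁, hW₁⟩ := h₁
  obtain ⟨W₂, hW₂⟩ := h₂
  refine ⟨W₁.append W₂, fun x hx => ?_⟩
  rcases (SimpleGraph.Walk.mem_support_append_iff _ _).1 hx with hx | hx
  exacts [hW₁ x hx, hW₂ x hx]

lemma mono {D' : Finset V} (h : ReachableIn G D v w) (hD : D ⊆ D') : ReachableIn G D' v w := by
  obtain ⟨W, hW⟩ := h
  exact ⟨W, fun x hx => hD (hW x hx)⟩

lemma of_adj (hv : v ∈ D) (hw : w ∈ D) (h : G.Adj v w) : ReachableIn G D v w :=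
  ⟨h.toWalk, by simp [hv, hw]⟩

lemma of_union_left [DecidableEq V] {A B : Finset V} (hAB : ∀ a ∈ A, ∀ b ∈ B, ¬ G.Adj a b)
    (hv : v ∈ A) (h : ReachableIn G (A ∪ B) v w) : ReachableIn G A v w := by
  obtain ⟨W, hW⟩ := h
  refine ⟨W, fun x hx => ?_⟩
  by_contra hxA
  -- the walk would leave `A` along a dart, whose head lies in `B`
  obtain ⟨d, hd, hdA, hdA'⟩ := (W.takeUntil x hx).exists_boundary_dart (A : Set V) hv hxA
  have hdB : d.snd ∈ A ∪ B := hW _ (W.support_takeUntil_subset_support hx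
    ((W.takeUntil x hx).dart_snd_mem_support_of_mem_darts hd))
  exact hAB _ hdA _ ((Finset.mem_union.1 hdB).resolve_left hdA') d.adj

end ReachableIn

open scoped Classical in
/-- The vertex set of the connected component of `v` in `G[D]`; empty when `v ∉ D`. -/
noncomputable def componentIn (G : SimpleGraph V) (D : Finset V) (v : V) : Finset V :=
  D.filter (ReachableIn G D v)

lemma mem_componentIn : w ∈ componentIn G D v ↔ ReachableIn G D v w := by
  simpa [componentIn] using fun h => h.right_mem

lemma componentIn_subset : componentIn G D v ⊆ D := fun _ hw => (mem_componentIn.1 hw).right_mem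

lemma mem_componentIn_self (hv : v ∈ D) : v ∈ componentIn G D v :=
  mem_componentIn.2 (.refl hv)

lemma ReachableIn.componentIn (h : ReachableIn G D v w) :
    ReachableIn G (componentIn G D v) v w := by
  classical
  obtain ⟨W, hW⟩ := h
  -- every vertex of `W` is reached from `v` along a prefix of `W`
  exact ⟨W, fun x hx => mem_componentIn.2
    ⟨W.takeUntil x hx, fun y hy => hW y (W.support_takeUntil_subset_support hx hy)⟩⟩

lemma conn_componentIn : Conn G (componentIn G D v) := fun _ hw _ hx =>
  (mem_componentIn.1 hw).componentIn.symm.trans (mem_componentIn.1 hx).componentIn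

variable [DecidableEq V]

noncomputable def componentsIn (G : SimpleGraph V) (D : Finset V) : Finset (Finset V) :=
  D.image (componentIn G D)

lemma not_adj_componentIn_sdiff :
    ∀ a ∈ componentIn G D v, ∀ b ∈ D \ componentIn G D v, ¬ G.Adj a b := by
  intro a ha b hb hab
  rw [Finset.mem_sdiff] at hb
  exact hb.2 (mem_componentIn.2
    ((mem_componentIn.1 ha).trans (.of_adj (componentIn_subset ha) hb.1 hab)))

lemma mem_componentsIn {C : Finset V} : C ∈ componentsIn G D ↔ IsMaxConnComp G D C := by
  simp only [componentsIn, Finset.mem_image]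
  constructor
  · rintro ⟨v, hv, rfl⟩
    refine ⟨componentIn_subset, ⟨v, mem_componentIn_self hv⟩, conn_componentIn,
      fun C' hC' hC'D hconn => ?_⟩
    refine Finset.Subset.antisymm (fun y hy => ?_) hC'
    exact mem_componentIn.2
      (ReachableIn.mono (hconn v (hC' (mem_componentIn_self hv)) y hy) hC'D)
  · rintro ⟨hCD, ⟨v, hv⟩, hconn, hmax⟩
    refine ⟨v, hCD hv, hmax _ (fun y hy => ?_) componentIn_subset conn_componentIn⟩
    exact mem_componentIn.2 (ReachableIn.mono (hconn v hv y hy) hCD)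

lemma componentsIn_empty : componentsIn G ∅ = ∅ := by
  simp [componentsIn]

lemma componentsIn_eq_singleton (hne : D.Nonempty) (hD : Conn G D) : componentsIn G D = {D} := by
  have hcomp : ∀ u ∈ D, componentIn G D u = D := fun u hu =>
    Finset.Subset.antisymm componentIn_subset fun w hw => mem_componentIn.2 (hD u hu w hw)
  rw [componentsIn, Finset.image_congr hcomp, Finset.image_const hne]

lemma componentIn_union_left {A B : Finset V} (hAB : ∀ a ∈ A, ∀ b ∈ B, ¬ G.Adj a b)
    (hv : v ∈ A) : componentIn G (A ∪ B) v = componentIn G A v := by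
  ext x
  simp only [mem_componentIn]
  exact ⟨ReachableIn.of_union_left hAB hv, fun h => h.mono Finset.subset_union_left⟩

lemma componentsIn_union {A B : Finset V} (hAB : ∀ a ∈ A, ∀ b ∈ B, ¬ G.Adj a b) :
    componentsIn G (A ∪ B) = componentsIn G A ∪ componentsIn G B := by
  have hBA : ∀ b ∈ B, ∀ a ∈ A, ¬ G.Adj b a := fun b hb a ha h => hAB a ha b hb h.symm
  rw [componentsIn, Finset.image_union, componentsIn, componentsIn]
  congr 1
  · exact Finset.image_congr fun u hu => componentIn_union_left hAB hu
  · exact Finset.image_congr fun u hu => by rw [Finset.union_comm, componentIn_union_left hBA hu]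

lemma eq_componentsIn_of_forall_mem_iff {𝒞 : Finset (Finset V)}
    (h𝒞 : ∀ C : Finset V, C ∈ 𝒞 ↔ IsMaxConnComp G D C) : 𝒞 = componentsIn G D :=
  Finset.ext fun C => (h𝒞 C).trans mem_componentsIn.symm

lemma disjoint_componentsIn {A B : Finset V} (h : Disjoint A B) :
    Disjoint (componentsIn G A) (componentsIn G B) := by
  simp only [componentsIn, Finset.disjoint_left, Finset.mem_image]
  rintro _ ⟨u, hu, rfl⟩ ⟨w, hw, hwu⟩
  have : w ∈ componentIn G A u := hwu ▸ mem_componentIn_self hw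
  exact Finset.disjoint_left.1 h (componentIn_subset this) hw

end Components

variable [Fintype V] [DecidableEq V]

section Factorization

variable {G : SimpleGraph V} {p : (V → Bool) → ℝ}

lemma subset_compl_spo_iff [DecidableRel G.Adj] {A B : Finset V} :
    B ⊆ univ \ spo G A ↔ Disjoint A B ∧ ∀ a ∈ A, ∀ b ∈ B, ¬ G.Adj a b := by
  simp only [Finset.subset_iff, Finset.mem_sdiff, Finset.mem_univ, true_and, spo,
    Finset.mem_filter, not_or, not_exists, not_and, Finset.disjoint_right]
  exact ⟨fun h => ⟨fun b hb => (h hb).1, fun a ha b hb => (h hb).2 a ha⟩,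
    fun h b hb => ⟨h.1 hb, fun a ha => h.2 a ha b hb⟩⟩

lemma qM_eq_prod_componentsIn [DecidableRel G.Adj] (hp : IsDist p) (hcs : CSMP G p)
    (D : Finset V) : qM p D = ∏ C ∈ componentsIn G D, qM p C := by
  induction D using Finset.strongInduction with
  | H D ih =>
  rcases D.eq_empty_or_nonempty with rfl | ⟨v, hv⟩
  · rw [componentsIn_empty, Finset.prod_empty, qM_empty hp]
  set C := componentIn G D v
  have hCD : C ∪ (D \ C) = D := Finset.union_sdiff_of_subset componentIn_subset
  have hsep : D \ C ⊆ univ \ spo G C :=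
    subset_compl_spo_iff.2 ⟨Finset.disjoint_sdiff, not_adj_componentIn_sdiff⟩
  have hq : qM p D = qM p C * qM p (D \ C) := by
    conv_lhs => rw [← hCD]
    exact indep_iff_qM_union.1 (hcs C ⟨v, mem_componentIn_self hv⟩ conn_componentIn)
      C subset_rfl _ hsep
  have hcomps : componentsIn G D = componentsIn G C ∪ componentsIn G (D \ C) := by
    conv_lhs => rw [← hCD]
    exact componentsIn_union not_adj_componentIn_sdiff
  rw [hq, hcomps, Finset.prod_union (disjoint_componentsIn Finset.disjoint_sdiff),
    componentsIn_eq_singleton ⟨v, mem_componentIn_self hv⟩ conn_componentIn,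
    Finset.prod_singleton, ← ih _ (Finset.sdiff_ssubset componentIn_subset
      ⟨v, mem_componentIn_self hv⟩)]

lemma csmp_of_qM_eq_prod_componentsIn [DecidableRel G.Adj]
    (hq : ∀ D : Finset V, qM p D = ∏ C ∈ componentsIn G D, qM p C) : CSMP G p := by
  intro C _ _
  refine indep_iff_qM_union.2 fun A hA B hB => ?_
  obtain ⟨hdisj, hadj⟩ := subset_compl_spo_iff.1 hB
  have hAB : ∀ a ∈ A, ∀ b ∈ B, ¬ G.Adj a b := fun a ha b hb => hadj a (hA ha) b hb
  rw [hq, hq A, hq B, componentsIn_union hAB,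
    Finset.prod_union (disjoint_componentsIn (hdisj.mono_left hA))]

/-- A nonempty connected `D` is its own only component, and `q_∅ = 1` is the empty
product. -/
lemma forall_not_conn_qM_eq_prod_iff (hp : IsDist p) :
    (∀ D : Finset V, ¬ Conn G D →
        ∀ 𝒞 : Finset (Finset V), (∀ C : Finset V, C ∈ 𝒞 ↔ IsMaxConnComp G D C) →
          qM p D = ∏ C ∈ 𝒞, qM p C) ↔
      ∀ D : Finset V, qM p D = ∏ C ∈ componentsIn G D, qM p C := by
  refine ⟨fun H D => ?_,
    fun H D _ 𝒞 h𝒞 => eq_componentsIn_of_forall_mem_iff h𝒞 ▸ H D⟩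
  by_cases hD : Conn G D
  · rcases D.eq_empty_or_nonempty with rfl | hne
    · rw [componentsIn_empty, Finset.prod_empty, qM_empty hp]
    · rw [componentsIn_eq_singleton hne hD, Finset.prod_singleton]
  · exact H D hD _ fun C => mem_componentsIn

end Factorization

/-- Theorem (Möbius constraints): `p ∈ B(G)` iff for every disconnected set `D`,
with inclusion-maximal connected subsets `C_1, …, C_r`, the Möbius parameters
satisfy `q_D = q_{C_1} ⋯ q_{C_r}`. -/
theorem stmt2 (G : SimpleGraph V) [DecidableRel G.Adj] (p : (V → Bool) → ℝ)
    (hp : IsDist p) :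
    CSMP G p ↔
      ∀ D : Finset V, ¬ Conn G D →
        ∀ 𝒞 : Finset (Finset V), (∀ C : Finset V, C ∈ 𝒞 ↔ IsMaxConnComp G D C) →
          qM p D = ∏ C ∈ 𝒞, qM p C := by
  rw [forall_not_conn_qM_eq_prod_iff hp]
  exact ⟨qM_eq_prod_componentsIn hp, csmp_of_qM_eq_prod_componentsIn⟩

end BMMI
end

section
/- Let G = (V,E) be a finite bi-directed graph and let p be a binary distribution on V. Then p satisfies the global Markov property for G if and only if p satisfies the connected set Markov property for G. -/
/-!
Both properties are handled through conditional independence evaluated at a single joint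
assignment, for which decomposition, weak union and contraction hold for every nonnegative `p`.

If `p` is globally Markov, a connected set `C` and the complement of `spo C` are separated by
`spo C \ C`, and the global property with empty conditioning set is the connected set property.

Conversely, the connected set property makes disjoint sets `A`, `B` with no edge between them
independent: the component `K` in `A` of a vertex of `A` is connected, so `K ⫫ (A \ K) ∪ B`; by
induction `A \ K ⫫ B`, and contraction gives `A ⫫ B`. If `V \ (A ∪ B ∪ C)` separates `A` from
`B`, split `S = A ∪ B ∪ C` into the vertices reachable from `B` inside `S` and the rest. No edge
joins the two parts, so they are independent; they contain `B` and `A`, and weak union moves the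
remaining vertices, which are exactly `C`, into the conditioning set.
-/

open Finset

namespace BMMI

variable {V : Type*} [Fintype V] [DecidableEq V]

/-- `Pr3 p A B C a b c` is the probability of the joint event
`X_A = a|_A, X_B = b|_B, X_C = c|_C`. -/
def Pr3 (p : (V → Bool) → ℝ) (A B C : Finset V) (a b c : V → Bool) : ℝ :=
  ∑ i ∈ Finset.univ.filter
      (fun i : V → Bool =>
        (∀ v ∈ A, i v = a v) ∧ (∀ v ∈ B, i v = b v) ∧ (∀ v ∈ C, i v = c v)), p i

/-- Conditional independence `X_A ⫫ X_B | X_C` under `p`. -/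
def CondIndep (p : (V → Bool) → ℝ) (A B C : Finset V) : Prop :=
  ∀ a b c : V → Bool,
    Pr3 p A B C a b c * Pr p C c = Pr2 p A C a c * Pr2 p B C b c

/-- `A` and `B` are separated by `D` in `G`: every walk from `A` to `B` meets `D`. -/
def Separated (G : SimpleGraph V) (A B D : Finset V) : Prop :=
  ∀ a ∈ A, ∀ b ∈ B, ∀ W : G.Walk a b, ∃ x ∈ W.support, x ∈ D

/-- The global Markov property for the bi-directed graph `G`. -/
def GMP (G : SimpleGraph V) [DecidableRel G.Adj] (p : (V → Bool) → ℝ) : Prop :=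
  ∀ A B C : Finset V, Disjoint A B → Disjoint A C → Disjoint B C →
    Separated G A B (Finset.univ \ (A ∪ B ∪ C)) → CondIndep p A B C

end BMMI

namespace BMMI

section Probability

variable {V : Type*} [Fintype V] [DecidableEq V] {p : (V → Bool) → ℝ}
  {S T X Y Z W A B C : Finset V}

/-- Conditional independence `X ⫫ Y | Z` tested at a single joint assignment `x`. It agrees with
`CondIndep` for pairwise disjoint sets (`condIndep_iff_ci`), and the semigraphoid rules hold for
it for every nonnegative `p`, normalised or not. -/
def CI (p : (V → Bool) → ℝ) (X Y Z : Finset V) : Prop :=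
  ∀ x, Pr p (X ∪ Y ∪ Z) x * Pr p Z x = Pr p (X ∪ Z) x * Pr p (Y ∪ Z) x

theorem sum_filter_eq_pr (P : (V → Bool) → Prop) [DecidablePred P] {x : V → Bool}
    (hP : ∀ i, P i ↔ ∀ v ∈ S, i v = x v) : ∑ i ∈ univ.filter P, p i = Pr p S x :=
  Finset.sum_congr (Finset.filter_congr fun i _ => hP i) fun _ _ => rfl

theorem pr_congr {x y : V → Bool} (h : ∀ v ∈ S, x v = y v) : Pr p S x = Pr p S y :=
  sum_filter_eq_pr _ fun i => forall₂_congr fun v hv => by rw [h v hv]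

theorem pr_update_of_notMem {w : V} (hw : w ∉ S) (x : V → Bool) (b : Bool) :
    Pr p S (Function.update x w b) = Pr p S x :=
  pr_congr fun _ hv => Function.update_of_ne (ne_of_mem_of_not_mem hv hw) _ _

theorem pr_empty (hp : ∑ i, p i = 1) (x : V → Bool) : Pr p ∅ x = 1 := by
  simpa [Pr] using hp

theorem pr_anti (hp : ∀ i, 0 ≤ p i) (hST : S ⊆ T) (x : V → Bool) : Pr p T x ≤ Pr p S x :=
  Finset.sum_le_sum_of_subset_of_nonneg
    (fun _ hi => by simp only [mem_filter] at hi ⊢; exact ⟨hi.1, fun v hv => hi.2 v (hST hv)⟩)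
    fun i _ _ => hp i

theorem pr_eq_zero_of_subset (hp : ∀ i, 0 ≤ p i) (hST : S ⊆ T) {x : V → Bool}
    (h : Pr p S x = 0) : Pr p T x = 0 :=
  le_antisymm (h ▸ pr_anti hp hST x) (Finset.sum_nonneg fun i _ => hp i)

theorem pr_eq_add_update {w : V} (hw : w ∉ S) (x : V → Bool) :
    Pr p S x = Pr p (insert w S) (Function.update x w true)
      + Pr p (insert w S) (Function.update x w false) := by
  have hmem : ∀ (i : V → Bool) b, (∀ v ∈ insert w S, i v = Function.update x w b v) ↔
      i w = b ∧ ∀ v ∈ S, i v = x v := fun i b => by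
    rw [forall_mem_insert, Function.update_self]
    exact and_congr_right fun _ => forall₂_congr fun v hv => by
      rw [Function.update_of_ne (ne_of_mem_of_not_mem hv hw)]
  rw [Pr, ← Finset.sum_filter_add_sum_filter_not _ (fun i => i w = true), Finset.filter_filter,
    Finset.filter_filter, sum_filter_eq_pr _ fun i => and_comm.trans (hmem i true).symm,
    sum_filter_eq_pr _ fun i => (by rw [Bool.not_eq_true, and_comm]; exact (hmem i false).symm)]

theorem pr2_eq_pr {a b x : V → Bool} (ha : ∀ v ∈ S, x v = a v) (hb : ∀ v ∈ T, x v = b v) :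
    Pr2 p S T a b = Pr p (S ∪ T) x := by
  refine sum_filter_eq_pr _ fun i => ?_
  rw [forall_mem_union]
  exact and_congr (forall₂_congr fun v hv => by rw [ha v hv])
    (forall₂_congr fun v hv => by rw [hb v hv])

theorem pr3_eq_pr {a b c x : V → Bool} (ha : ∀ v ∈ X, x v = a v) (hb : ∀ v ∈ Y, x v = b v)
    (hc : ∀ v ∈ Z, x v = c v) : Pr3 p X Y Z a b c = Pr p (X ∪ Y ∪ Z) x := by
  refine sum_filter_eq_pr _ fun i => ?_
  rw [forall_mem_union, forall_mem_union, and_assoc]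
  exact and_congr (forall₂_congr fun v hv => by rw [ha v hv]) <| and_congr
    (forall₂_congr fun v hv => by rw [hb v hv]) (forall₂_congr fun v hv => by rw [hc v hv])

theorem indep_iff_ci_empty (hp : ∑ i, p i = 1) (hST : Disjoint S T) :
    Indep p S T ↔ CI p S T ∅ := by
  simp only [Indep, CI, union_empty, pr_empty hp, mul_one]
  refine ⟨fun h x => by rw [← h x x, pr2_eq_pr (fun _ _ => rfl) fun _ _ => rfl], fun h a b => ?_⟩
  have ha : ∀ v ∈ S, S.piecewise a b v = a v := fun v hv => piecewise_eq_of_mem _ _ _ hv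
  have hb : ∀ v ∈ T, S.piecewise a b v = b v := fun v hv =>
    piecewise_eq_of_notMem _ _ _ (disjoint_right.1 hST hv)
  rw [pr2_eq_pr ha hb, h, pr_congr ha, pr_congr hb]

theorem exists_agree_of_pairwise_disjoint {α β : Type*} [DecidableEq α] {A B C : Finset α}
    (hAB : Disjoint A B) (hAC : Disjoint A C) (hBC : Disjoint B C) (a b c : α → β) :
    ∃ x : α → β, (∀ v ∈ A, x v = a v) ∧ (∀ v ∈ B, x v = b v) ∧ ∀ v ∈ C, x v = c v :=
  ⟨A.piecewise a (B.piecewise b c), fun v hv => piecewise_eq_of_mem _ _ _ hv,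
    fun v hv => by
      rw [piecewise_eq_of_notMem _ _ _ (disjoint_right.1 hAB hv), piecewise_eq_of_mem _ _ _ hv],
    fun v hv => by
      rw [piecewise_eq_of_notMem _ _ _ (disjoint_right.1 hAC hv),
        piecewise_eq_of_notMem _ _ _ (disjoint_right.1 hBC hv)]⟩

theorem condIndep_iff_ci (hAB : Disjoint A B) (hAC : Disjoint A C) (hBC : Disjoint B C) :
    CondIndep p A B C ↔ CI p A B C := by
  refine ⟨fun h x => ?_, fun h a b c => ?_⟩
  · simpa only [pr3_eq_pr (x := x) (fun _ _ => rfl) (fun _ _ => rfl) (fun _ _ => rfl),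
      pr2_eq_pr (x := x) (fun _ _ => rfl) fun _ _ => rfl] using h x x x
  · obtain ⟨x, ha, hb, hc⟩ := exists_agree_of_pairwise_disjoint hAB hAC hBC a b c
    rw [pr3_eq_pr ha hb hc, ← pr_congr hc, pr2_eq_pr ha hc, pr2_eq_pr hb hc]
    exact h x

theorem CI.symm (h : CI p X Y Z) : CI p Y X Z := fun x => by
  rw [union_comm Y X, h x, mul_comm]

theorem CI.of_insert_right {w : V} (hwX : w ∉ X) (hwZ : w ∉ Z) (h : CI p X (insert w Y) Z) :
    CI p X Y Z := by
  by_cases hwY : w ∈ Y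
  · rwa [insert_eq_of_mem hwY] at h
  intro x
  have hwXZ : w ∉ X ∪ Z := by simp [hwX, hwZ]
  have hslice : ∀ b, Pr p (insert w (X ∪ Y ∪ Z)) (Function.update x w b) * Pr p Z x =
      Pr p (X ∪ Z) x * Pr p (insert w (Y ∪ Z)) (Function.update x w b) := fun b => by
    simpa only [union_insert, insert_union, pr_update_of_notMem hwZ,
      pr_update_of_notMem hwXZ] using h (Function.update x w b)
  have hwXYZ : w ∉ X ∪ Y ∪ Z := by simp [hwX, hwY, hwZ]
  have hwYZ : w ∉ Y ∪ Z := by simp [hwY, hwZ]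
  rw [pr_eq_add_update hwXYZ, pr_eq_add_update hwYZ, add_mul, mul_add, hslice, hslice]

theorem CI.decomposition (hXW : Disjoint X W) (hZW : Disjoint Z W) (h : CI p X (Y ∪ W) Z) :
    CI p X Y Z := by
  induction W using Finset.induction_on with
  | empty => simpa using h
  | insert w W hw ih =>
    rw [disjoint_insert_right] at hXW hZW
    rw [union_insert] at h
    exact ih hXW.2 hZW.2 (h.of_insert_right hXW.1 hZW.1)

theorem CI.mono_right {Y' : Finset V} (hXY : Disjoint X Y') (hZY : Disjoint Z Y') (hY : Y ⊆ Y')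
    (h : CI p X Y' Z) : CI p X Y Z :=
  (CI.decomposition (W := Y' \ Y) (hXY.mono_right sdiff_subset) (hZY.mono_right sdiff_subset)
    (by rwa [union_sdiff_of_subset hY]))

theorem CI.weak_union (hp : ∀ i, 0 ≤ p i) (hXY : Disjoint X Y) (hZY : Disjoint Z Y)
    (h : CI p X (Y ∪ W) Z) : CI p X Y (Z ∪ W) := by
  have hW : CI p X W Z := (union_comm Y W ▸ h).decomposition hXY hZY
  intro x
  have e := h x
  have eW := hW x
  rw [show X ∪ (Y ∪ W) ∪ Z = X ∪ Y ∪ (Z ∪ W) by ac_rfl,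
    show Y ∪ W ∪ Z = Y ∪ (Z ∪ W) by ac_rfl] at e
  rw [show X ∪ W ∪ Z = X ∪ (Z ∪ W) by ac_rfl, union_comm W Z] at eW
  by_cases hZ : Pr p Z x = 0
  · have hZW : Pr p (Z ∪ W) x = 0 := pr_eq_zero_of_subset hp subset_union_left hZ
    have hXZW : Pr p (X ∪ (Z ∪ W)) x = 0 := pr_eq_zero_of_subset hp subset_union_right hZW
    rw [hZW, hXZW, mul_zero, zero_mul]
  · apply mul_left_cancel₀ hZ
    linear_combination Pr p (Z ∪ W) x * e - Pr p (Y ∪ (Z ∪ W)) x * eW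

theorem CI.contraction (hp : ∀ i, 0 ≤ p i) (h₁ : CI p X Y Z) (h₂ : CI p X W (Z ∪ Y)) :
    CI p X (Y ∪ W) Z := by
  intro x
  have e₁ := h₁ x
  have e₂ := h₂ x
  rw [show X ∪ W ∪ (Z ∪ Y) = X ∪ (Y ∪ W) ∪ Z by ac_rfl, show X ∪ (Z ∪ Y) = X ∪ Y ∪ Z by ac_rfl,
    show W ∪ (Z ∪ Y) = Y ∪ W ∪ Z by ac_rfl, union_comm Z Y] at e₂
  by_cases hYZ : Pr p (Y ∪ Z) x = 0
  · have hYWZ : Pr p (Y ∪ W ∪ Z) x = 0 :=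
      pr_eq_zero_of_subset hp (union_subset_union_left subset_union_left) hYZ
    have hXYWZ : Pr p (X ∪ (Y ∪ W) ∪ Z) x = 0 :=
      pr_eq_zero_of_subset hp (union_subset_union_left subset_union_right) hYWZ
    rw [hYWZ, hXYWZ, mul_zero, zero_mul]
  · apply mul_right_cancel₀ hYZ
    linear_combination Pr p Z x * e₂ + Pr p (Y ∪ W ∪ Z) x * e₁

theorem CI.weak_union_of_subsets (hp : ∀ i, 0 ≤ p i) (hXY : Disjoint X Y) (hAZ : Disjoint A Z)
    (hBZ : Disjoint B Z) (hA : A ⊆ X) (hB : B ⊆ Y) (h : CI p X Y Z) :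
    CI p A B (Z ∪ (Y \ B) ∪ (X \ A)) := by
  have hXB : CI p X B (Z ∪ (Y \ B)) :=
    CI.weak_union hp (hXY.mono_right hB) hBZ.symm (by rwa [union_sdiff_of_subset hB])
  refine (CI.weak_union hp (hXY.symm.mono hB hA) ?_
    (by rw [union_sdiff_of_subset hA]; exact hXB.symm)).symm
  exact disjoint_union_left.2 ⟨hAZ.symm, (hXY.symm.mono_left sdiff_subset).mono_right hA⟩

end Probability

section Graph

variable {V : Type*} {G : SimpleGraph V} {S B K T : Finset V}

open Classical in
noncomputable def reachIn (G : SimpleGraph V) (S B : Finset V) : Finset V :=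
  S.filter fun v => ∃ b ∈ B, ∃ W : G.Walk b v, ∀ x ∈ W.support, x ∈ S

theorem mem_reachIn {v : V} :
    v ∈ reachIn G S B ↔ v ∈ S ∧ ∃ b ∈ B, ∃ W : G.Walk b v, ∀ x ∈ W.support, x ∈ S := by
  classical
  rw [reachIn, mem_filter]

theorem reachIn_subset : reachIn G S B ⊆ S := by
  classical
  exact filter_subset _ _

theorem subset_reachIn (hBS : B ⊆ S) : B ⊆ reachIn G S B := fun b hb =>
  mem_reachIn.2 ⟨hBS hb, b, hb, .nil, by simpa using hBS hb⟩

theorem support_subset_reachIn {b v : V} (hb : b ∈ B) (W : G.Walk b v)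
    (hW : ∀ x ∈ W.support, x ∈ S) : ∀ x ∈ W.support, x ∈ reachIn G S B := by
  classical
  exact fun x hx => mem_reachIn.2 ⟨hW x hx, b, hb, W.takeUntil x hx,
    fun y hy => hW y (W.support_takeUntil_subset_support hx hy)⟩

theorem not_adj_of_mem_reachIn {u v : V} (hv : v ∈ reachIn G S B) (hu : u ∈ S)
    (hu' : u ∉ reachIn G S B) : ¬G.Adj v u := fun hvu => by
  obtain ⟨-, b, hb, W, hW⟩ := mem_reachIn.1 hv
  refine hu' (support_subset_reachIn hb (W.concat hvu) (fun x hx => ?_) u (by simp))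
  rw [SimpleGraph.Walk.support_concat, List.mem_append, List.mem_singleton] at hx
  exact hx.elim (hW x) fun hxu => hxu ▸ hu

theorem conn_reachIn_singleton {a : V} : Conn G (reachIn G S {a}) := by
  intro v hv w hw
  obtain ⟨-, _, ha, Wv, hWv⟩ := mem_reachIn.1 hv
  obtain ⟨-, _, ha', Ww, hWw⟩ := mem_reachIn.1 hw
  rw [mem_singleton] at ha ha'
  subst ha ha'
  have hv' := support_subset_reachIn (mem_singleton_self _) Wv hWv
  have hw' := support_subset_reachIn (mem_singleton_self _) Ww hWw
  refine ⟨Wv.reverse.append Ww, fun x hx => ?_⟩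
  rw [SimpleGraph.Walk.mem_support_append_iff, SimpleGraph.Walk.support_reverse,
    List.mem_reverse] at hx
  exact hx.elim (hv' x) (hw' x)

theorem disjoint_reachIn_of_separated {A D : Finset V} (h : Separated G A B D)
    (hD : Disjoint D S) : Disjoint A (reachIn G S B) := by
  refine disjoint_left.2 fun v hvA hv => ?_
  obtain ⟨-, b, hb, W, hW⟩ := mem_reachIn.1 hv
  obtain ⟨x, hx, hxS⟩ := h v hvA b hb W.reverse
  exact disjoint_left.1 hD hxS (hW x (by simpa using hx))

variable [Fintype V] [DecidableEq V] [DecidableRel G.Adj]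

theorem mem_spo {A : Finset V} {w : V} : w ∈ spo G A ↔ w ∈ A ∨ ∃ v ∈ A, G.Adj v w := by
  simp [spo]

theorem disjoint_compl_spo : Disjoint K (univ \ spo G K) :=
  disjoint_left.2 fun _ hv hv' => (mem_sdiff.1 hv').2 (mem_spo.2 (.inl hv))

theorem subset_compl_spo (hKT : Disjoint K T) (h : ∀ v ∈ K, ∀ u ∈ T, ¬G.Adj v u) :
    T ⊆ univ \ spo G K := fun u hu => by
  refine mem_sdiff.2 ⟨mem_univ u, fun hu' => ?_⟩
  obtain huK | ⟨v, hv, hvu⟩ := mem_spo.1 hu'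
  · exact disjoint_right.1 hKT hu huK
  · exact h v hv u hu hvu

theorem separated_compl_spo (C : Finset V) :
    Separated G C (univ \ spo G C) (univ \ (C ∪ (univ \ spo G C))) := by
  intro a ha b hb W
  have hbC : b ∉ (C : Set V) := fun hbC => (mem_sdiff.1 hb).2 (mem_spo.2 (.inl hbC))
  obtain ⟨d, hd, hd₁, hd₂⟩ := W.exists_boundary_dart C ha hbC
  refine ⟨d.snd, W.dart_snd_mem_support_of_mem_darts hd, ?_⟩
  have : d.snd ∈ spo G C := mem_spo.2 (.inr ⟨d.fst, hd₁, d.adj⟩)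
  simp_all

end Graph

section Markov

variable {V : Type*} [Fintype V] [DecidableEq V] {G : SimpleGraph V} [DecidableRel G.Adj]
  {p : (V → Bool) → ℝ}

theorem CSMP.ci_empty_of_forall_not_adj (hcs : CSMP G p) (hp : IsDist p) {A B : Finset V}
    (hAB : Disjoint A B) (hne : ∀ a ∈ A, ∀ b ∈ B, ¬G.Adj a b) : CI p A B ∅ := by
  induction A using Finset.strongInduction with
  | H A ih =>
  obtain rfl | ⟨a, ha⟩ := A.eq_empty_or_nonempty
  · intro x
    simp only [empty_union, union_empty, mul_comm]
  set K := reachIn G A {a}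
  have hKA : K ⊆ A := reachIn_subset
  have haK : a ∈ K := subset_reachIn (singleton_subset_iff.2 ha) (mem_singleton_self a)
  have hKrest : Disjoint K ((A \ K) ∪ B) :=
    disjoint_union_right.2 ⟨disjoint_sdiff, hAB.mono_left hKA⟩
  have hnoedge : ∀ v ∈ K, ∀ u ∈ (A \ K) ∪ B, ¬G.Adj v u := fun v hv u hu => by
    obtain hu | hu := mem_union.1 hu
    · exact not_adj_of_mem_reachIn hv (mem_sdiff.1 hu).1 (mem_sdiff.1 hu).2
    · exact hne v (hKA hv) u hu
  have hKcompl : CI p K (univ \ spo G K) ∅ :=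
    (indep_iff_ci_empty hp.2 disjoint_compl_spo).1 (hcs K ⟨a, haK⟩ conn_reachIn_singleton)
  have hK : CI p K (B ∪ (A \ K)) ∅ := by
    rw [union_comm]
    exact hKcompl.mono_right disjoint_compl_spo (disjoint_empty_left _)
      (subset_compl_spo hKrest hnoedge)
  have hrest : CI p (A \ K) B ∅ := ih (A \ K) (sdiff_ssubset hKA ⟨a, haK⟩)
    (hAB.mono_left sdiff_subset) fun u hu => hne u (mem_sdiff.1 hu).1
  have hBK : CI p B K (∅ ∪ (A \ K)) :=
    (hK.weak_union hp.1 (hAB.mono_left hKA) (disjoint_empty_left _)).symm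
  simpa only [sdiff_union_of_subset hKA] using (hrest.symm.contraction hp.1 hBK).symm

theorem GMP.csmp (hg : GMP G p) (hp : ∑ i, p i = 1) : CSMP G p := by
  intro C _ _
  have hCT : Disjoint C (univ \ spo G C) := disjoint_compl_spo
  have hsep := separated_compl_spo (G := G) C
  rw [← union_empty (C ∪ _)] at hsep
  rw [indep_iff_ci_empty hp hCT, ← condIndep_iff_ci hCT (disjoint_empty_right _)
    (disjoint_empty_right _)]
  exact hg _ _ _ hCT (disjoint_empty_right _) (disjoint_empty_right _) hsep

theorem CSMP.gmp (hcs : CSMP G p) (hp : IsDist p) : GMP G p := by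
  intro A B C hAB hAC hBC hsep
  set S := A ∪ B ∪ C
  set R := reachIn G S B
  have hBR : B ⊆ R := subset_reachIn (subset_union_right.trans subset_union_left)
  have hAR : A ⊆ S \ R := subset_sdiff.2 ⟨subset_union_left.trans subset_union_left,
    disjoint_reachIn_of_separated hsep sdiff_disjoint⟩
  have hindep : CI p (S \ R) R ∅ := hcs.ci_empty_of_forall_not_adj hp sdiff_disjoint
    fun u hu v hv huv => not_adj_of_mem_reachIn hv (mem_sdiff.1 hu).1 (mem_sdiff.1 hu).2 huv.symm
  have hC : ∅ ∪ (R \ B) ∪ ((S \ R) \ A) = C := by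
    ext v
    have hvR : v ∈ R → v ∈ S := fun h => reachIn_subset h
    have hvA : v ∈ A → v ∈ S \ R := fun h => hAR h
    have hvB : v ∈ B → v ∈ R := fun h => hBR h
    have hvAC : v ∈ A → v ∉ C := fun h => disjoint_left.1 hAC h
    have hvBC : v ∈ B → v ∉ C := fun h => disjoint_left.1 hBC h
    simp only [S, mem_union, mem_sdiff, notMem_empty, false_or] at hvR hvA ⊢
    tauto
  rw [condIndep_iff_ci hAB hAC hBC, ← hC]
  exact hindep.weak_union_of_subsets hp.1 sdiff_disjoint (disjoint_empty_right _)
    (disjoint_empty_right _) hAR hBR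

end Markov

variable {V : Type*} [Fintype V] [DecidableEq V]

/-- A binary distribution satisfies the global Markov property for `G` iff it
satisfies the connected set Markov property for `G`. -/
theorem stmt6 (G : SimpleGraph V) [DecidableRel G.Adj] (p : (V → Bool) → ℝ)
    (hp : IsDist p) : GMP G p ↔ CSMP G p :=
  ⟨fun h => h.csmp hp.2, fun h => h.gmp hp⟩

end BMMI
end
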